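/- arXiv:2002.04069 — 2 statements merged into one kernel-verified Lean document; each statement's English description precedes it below -/
import Mathlib

section
/- For any constant M > 0, the function g(x) = 1 / log(1 + M/x) is concave on (0, ∞). -/
/-!
With `L x = log (1 + M / x)` one has `g' x = M / (x (x + M) L²)`, so `g` is concave as soon as
`q x = x (x + M) L²` is increasing. Now `q' = L ((2x + M) L - 2M)`, which is nonnegative because
`L ≥ 2M / (2x + M)`, the first term of the positive series
`log (1 + 1/a) = ∑ 2 / ((2k + 1) (2a + 1) ^ (2k + 1))` at `a = x / M`.
-/

open Real Set

lemma two_div_two_mul_add_one_le_log_one_add_inv {a : ℝ} (ha : 0 < a) :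
    2 / (2 * a + 1) ≤ log (1 + a⁻¹) := by
  simpa [div_eq_mul_inv] using le_hasSum (hasSum_log_one_add_inv ha) 0 fun k _ => by positivity

lemma two_mul_le_mul_log_one_add_div {M x : ℝ} (hM : 0 < M) (hx : 0 < x) :
    2 * M ≤ (2 * x + M) * log (1 + M / x) := by
  have h := two_div_two_mul_add_one_le_log_one_add_inv (div_pos hx hM)
  rwa [inv_div, show 2 / (2 * (x / M) + 1) = 2 * M / (2 * x + M) by field_simp,
    div_le_iff₀' (by positivity)] at h

lemma log_one_add_div_pos {M x : ℝ} (hM : 0 < M) (hx : 0 < x) : 0 < log (1 + M / x) :=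
  log_pos (lt_add_of_pos_right 1 (div_pos hM hx))

lemma hasDerivAt_log_one_add_div {M x : ℝ} (hx : x ≠ 0) (hxM : x + M ≠ 0) :
    HasDerivAt (fun x => log (1 + M / x)) (-M / (x * (x + M))) x := by
  have h1 : HasDerivAt (fun x => 1 + M / x) (-M / x ^ 2) x := by
    simpa [div_eq_mul_inv, neg_div] using ((hasDerivAt_inv hx).const_mul M).const_add 1
  have hne : 1 + M / x ≠ 0 := by
    rw [one_add_div hx]; exact div_ne_zero hxM hx
  refine (h1.log hne).congr_deriv ?_
  rw [one_add_div hx]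
  field_simp

lemma hasDerivAt_one_div_log_one_add_div {M x : ℝ} (hM : 0 < M) (hx : 0 < x) :
    HasDerivAt (fun x => 1 / log (1 + M / x)) (M / (x * (x + M) * log (1 + M / x) ^ 2)) x := by
  refine (((hasDerivAt_log_one_add_div hx.ne' (by positivity)).inv
    (log_one_add_div_pos hM hx).ne').congr_deriv ?_).congr_of_eventuallyEq
    (Filter.Eventually.of_forall fun y => one_div _)
  field_simp

lemma hasDerivAt_mul_log_one_add_div_sq {M x : ℝ} (hx : x ≠ 0) (hxM : x + M ≠ 0) :
    HasDerivAt (fun x => x * (x + M) * log (1 + M / x) ^ 2)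
      (log (1 + M / x) * ((2 * x + M) * log (1 + M / x) - 2 * M)) x := by
  refine (((hasDerivAt_id' x).mul ((hasDerivAt_id' x).add_const M)).mul
    ((hasDerivAt_log_one_add_div hx hxM).pow 2)).congr_deriv ?_
  simp only [Pi.mul_apply, Pi.pow_apply]
  field_simp
  ring

lemma monotoneOn_mul_log_one_add_div_sq {M : ℝ} (hM : 0 < M) :
    MonotoneOn (fun x => x * (x + M) * log (1 + M / x) ^ 2) (Ioi 0) := by
  have hderiv (x : ℝ) (hx : 0 < x) := hasDerivAt_mul_log_one_add_div_sq (M := M) hx.ne' (by positivity)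
  refine monotoneOn_of_hasDerivWithinAt_nonneg (convex_Ioi 0)
    (fun x hx => (hderiv x hx).continuousAt.continuousWithinAt)
    (fun x hx => (hderiv x (interior_subset hx)).hasDerivWithinAt) fun x hx => ?_
  rw [interior_Ioi] at hx
  exact mul_nonneg (log_one_add_div_pos hM hx).le
    (sub_nonneg.2 (two_mul_le_mul_log_one_add_div hM hx))

theorem g_concave (M : ℝ) (hM : 0 < M) :
    ConcaveOn ℝ (Set.Ioi (0 : ℝ)) (fun x => 1 / Real.log (1 + M / x)) := by
  have hderiv (x : ℝ) (hx : 0 < x) := hasDerivAt_one_div_log_one_add_div hM hx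
  refine AntitoneOn.concaveOn_of_deriv (convex_Ioi 0)
    (fun x hx => (hderiv x hx).continuousAt.continuousWithinAt)
    (fun x hx => (hderiv x (interior_subset hx)).differentiableAt.differentiableWithinAt) ?_
  rw [interior_Ioi]
  refine AntitoneOn.congr (fun x hx y hy hxy => ?_) fun x hx => (hderiv x hx).deriv.symm
  have hq : 0 < x * (x + M) * log (1 + M / x) ^ 2 := by
    have := log_one_add_div_pos hM hx
    have : (0 : ℝ) < x := hx
    positivity
  exact div_le_div_of_nonneg_left hM.le hq (monotoneOn_mul_log_one_add_div_sq hM hx hy hxy)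
end

section
/- Suppose K links each achieve rate at least log2(1 + A/|S_k|) where A > 0 and |S_k| > 0 for k = 1,…,K, and the total latency is δ = ∑_{k=1}^K 1/R_k with R_k = log2(1 + A/|S_k|). Then δ ≤ K / log2(1 + A·K/∑_{k=1}^K |S_k|). -/
/-!
The map `x ↦ 1 / log (1 + A / x)` is concave on `(0, ∞)`, so Jensen's inequality at the mean of
the `S k` gives the bound. For concavity, write `L x = log (1 + A / x)`: the derivative of `1 / L`
is `A / (x (x + A) L²)`, and the derivative of that denominator is `L ((2x + A) L - 2A)`, which is
nonnegative by the Padé bound `log (1 + t) ≥ 2t / (2 + t)` at `t = A / x`. The Padé bound is the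
first term of the series `log (1 + t) = 2 ∑ (t / (t + 2))^(2k+1) / (2k + 1)`.
-/

open Set

namespace Real

theorem two_mul_div_two_add_le_log_one_add {t : ℝ} (ht : 0 ≤ t) :
    2 * t / (2 + t) ≤ log (1 + t) :=
  calc 2 * t / (2 + t) = 2 * (1 / (2 * (0 : ℕ) + 1)) * (t / (t + 2)) ^ (2 * 0 + 1) := by
        push_cast; ring
    _ ≤ log (1 + t) := le_hasSum (hasSum_log_one_add ht) 0 fun _ _ => by positivity

theorem two_mul_le_mul_log_one_add_div {A x : ℝ} (hA : 0 ≤ A) (hx : 0 < x) :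
    2 * A ≤ (2 * x + A) * log (1 + A / x) := by
  have h := two_mul_div_two_add_le_log_one_add (div_nonneg hA hx.le)
  rw [show 2 * (A / x) / (2 + A / x) = 2 * A / (2 * x + A) by field_simp,
    div_le_iff₀ (by positivity)] at h
  linarith

theorem hasDerivAt_log_one_add_div {A x : ℝ} (hx : x ≠ 0) (hxA : x + A ≠ 0) :
    HasDerivAt (fun y => log (1 + A / y)) (-(A / (x * (x + A)))) x := by
  have hu : HasDerivAt (fun y => 1 + A / y) (-(A / x ^ 2)) x := by
    simpa [div_eq_mul_inv] using ((hasDerivAt_inv hx).const_mul A).const_add 1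
  have hu_ne : 1 + A / x ≠ 0 := by
    rw [one_add_div hx]
    exact div_ne_zero hxA hx
  convert hu.log hu_ne using 1
  field_simp

theorem concaveOn_inv_log_one_add_div {A : ℝ} (hA : 0 < A) :
    ConcaveOn ℝ (Ioi 0) fun x => (log (1 + A / x))⁻¹ := by
  set L : ℝ → ℝ := fun x => log (1 + A / x)
  have hL_pos : ∀ x > 0, 0 < L x := fun x hx =>
    log_pos (by simp only [lt_add_iff_pos_right]; positivity)
  have hL' : ∀ x > 0, HasDerivAt L (-(A / (x * (x + A)))) x := fun x hx =>
    hasDerivAt_log_one_add_div hx.ne' (by positivity)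
  set D : ℝ → ℝ := fun x => x * (x + A) * L x ^ 2
  have hD_pos : ∀ x > 0, 0 < D x := fun x hx => by have := hL_pos x hx; positivity
  have hf' : ∀ x > 0, HasDerivAt (fun y => (L y)⁻¹) (A * (D x)⁻¹) x := fun x hx =>
    ((hL' x hx).fun_inv (hL_pos x hx).ne').congr_deriv (by simp only [D]; field_simp)
  have hD' : ∀ x > 0, HasDerivAt D (L x * ((2 * x + A) * L x - 2 * A)) x := fun x hx =>
    (((hasDerivAt_id' x).fun_mul ((hasDerivAt_id' x).add_const A)).fun_mul
      ((hL' x hx).fun_pow 2)).congr_deriv (by field_simp; ring)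
  have hf'' : ∀ x > 0, HasDerivAt (fun y => A * (D y)⁻¹)
      (A * (-(L x * ((2 * x + A) * L x - 2 * A)) / D x ^ 2)) x := fun x hx =>
    ((hD' x hx).fun_inv (hD_pos x hx).ne').const_mul A
  refine concaveOn_of_hasDerivWithinAt2_nonpos (convex_Ioi 0) (f' := fun x => A * (D x)⁻¹)
    (f'' := fun x => A * (-(L x * ((2 * x + A) * L x - 2 * A)) / D x ^ 2))
    (fun x hx => (hf' x hx).continuousAt.continuousWithinAt) ?_ ?_ ?_ <;> rw [interior_Ioi]
  · exact fun x hx => (hf' x hx).hasDerivWithinAt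
  · exact fun x hx => (hf'' x hx).hasDerivWithinAt
  · intro x (hx : 0 < x)
    have hpade : 0 ≤ (2 * x + A) * L x - 2 * A :=
      sub_nonneg.mpr (two_mul_le_mul_log_one_add_div hA.le hx)
    rw [neg_div, mul_neg, neg_nonpos]
    exact mul_nonneg hA.le (div_nonneg (mul_nonneg (hL_pos x hx).le hpade) (sq_nonneg _))

theorem concaveOn_one_div_logb_one_add_div {b A : ℝ} (hb : 1 ≤ b) (hA : 0 < A) :
    ConcaveOn ℝ (Ioi 0) fun x => 1 / logb b (1 + A / x) := by
  simp only [logb, one_div_div, div_eq_mul_inv (log b)]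
  exact (concaveOn_inv_log_one_add_div hA).smul (log_nonneg hb)

end Real

theorem latency_jensen (A : ℝ) (hA : 0 < A) (K : ℕ) (hK : 0 < K)
    (S : Fin K → ℝ) (hS : ∀ k, 0 < S k) :
    ∑ k, 1 / Real.logb 2 (1 + A / S k) ≤
      (K : ℝ) / Real.logb 2 (1 + A * K / ∑ k, S k) := by
  have hK' : (0 : ℝ) < K := Nat.cast_pos.mpr hK
  have hjensen := (Real.concaveOn_one_div_logb_one_add_div one_le_two hA).le_map_sum
    (t := Finset.univ) (w := fun _ => (K : ℝ)⁻¹) (p := S) (fun _ _ => by positivity)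
    (by simp [hK'.ne']) (fun k _ => hS k)
  have hmean : A / ((K : ℝ)⁻¹ • ∑ k, S k) = A * K / ∑ k, S k := by
    rw [smul_eq_mul]
    field_simp
  rwa [← Finset.smul_sum, ← Finset.smul_sum, hmean, smul_eq_mul, inv_mul_le_iff₀ hK',
    mul_one_div] at hjensen
end
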